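/- arXiv:2112.08056 — 2 statements merged into one kernel-verified Lean document; each statement's English description precedes it below -/
import Mathlib

section
/- Let X ⊆ ℵ_{ω+ω} be a set closed under a function f: (ℵ_{ω+ω})² → ℵ_{ω+ω} such that for each α < ℵ_{ω+ω}, the map β ↦ f(α,β) restricted to β < α is an injection of α into Card(α). If Card(X ∩ ℵ_{ω+(n+1)}) = ℵ_{n+1} for all n < ω, then for every n < ω the order type of X ∩ ℵ_{ω+(n+2)} equals ℵ_{n+2}. -/
open Cardinal Ordinal FirstOrder

noncomputable section
namespace Paper

/-- The von Neumann ordinal corresponding to an ordinal, as a `ZFSet`. -/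
noncomputable def ordZF (o : Ordinal.{0}) : ZFSet.{0} :=
  ZFSet.range fun i : o.ToType => ordZF (((Ordinal.ToType.mk (o := o)).symm i : Set.Iio o) : Ordinal)
termination_by o
decreasing_by exact ((Ordinal.ToType.mk (o := o)).symm i).2

/-- `HSet θ` is H_θ: the collection of sets hereditarily of cardinality `< θ`. -/
def HSet (θ : Cardinal.{0}) : Set ZFSet.{0} :=
  {x | ∃ t : ZFSet, x ∈ t ∧ t.IsTransitive ∧ Cardinal.mk t.toSet < Cardinal.lift.{1} θ}

/-- The language with a single binary relation, interpreted as membership. -/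
abbrev memLang : FirstOrder.Language := FirstOrder.Language.graph

instance zfSetStructure (S : Set ZFSet.{0}) : memLang.Structure S where
  funMap := fun f _ => isEmptyElim f
  RelMap := fun {n} r v =>
    match n, r with
    | 2, .adj => ((v 0 : ZFSet) ∈ (v 1 : ZFSet))

/-- Membership of a `ZFSet` in (the carrier of) an elementary substructure of `(H_θ, ∈)`. -/
def inX {θ : Cardinal.{0}} (X : memLang.ElementarySubstructure ↥(HSet θ)) (a : ZFSet) : Prop :=
  ∃ x : ↥(HSet θ), x ∈ X ∧ (x : ZFSet) = a

/-- The trace of `X` on the ordinals: `X ∩ Ord`. -/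
def ordsIn {θ : Cardinal.{0}} (X : memLang.ElementarySubstructure ↥(HSet θ)) : Set Ordinal :=
  {o | inX X (ordZF o)}

/-- `z` codes the set of ordinals `x`. -/
def codesOrdSet (z : ZFSet) (x : Set Ordinal) : Prop :=
  ∀ w : ZFSet, w ∈ z ↔ ∃ o ∈ x, w = ordZF o

/-- The set of ordinals `x` is an element of `X` (as coded by a `ZFSet`). -/
def setInX {θ : Cardinal.{0}} (X : memLang.ElementarySubstructure ↥(HSet θ))
    (x : Set Ordinal) : Prop :=
  ∃ z : ZFSet, inX X z ∧ codesOrdSet z x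

/-- The Generalized Continuum Hypothesis. -/
def GCH : Prop := ∀ c : Cardinal.{0}, ℵ₀ ≤ c → 2 ^ c = Order.succ c

/-- A Chang set: `Card(X ∩ ℵ_{ω+(n+1)}) = ℵ_{n+1}` for all `n < ω`. -/
def ChangSet (X : Set Ordinal.{0}) : Prop :=
  ∀ n : ℕ, Cardinal.mk ↥(X ∩ Set.Iio (Cardinal.aleph (Ordinal.omega0 + (n + 1))).ord)
    = Cardinal.lift.{1} (Cardinal.aleph.{0} (n + 1))

/-- The long Chang's Conjecture `(ℵ_{ω+1},ℵ_{ω+2},…) ↠ (ℵ_1,ℵ_2,…)`: every structure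
(equivalently, every finitary closure operator) on `ℵ_{ω+ω}` has a Chang substructure. -/
def LongCC : Prop :=
  ∀ F : Finset Ordinal.{0} → Ordinal.{0},
    (∀ s, F s < (Cardinal.aleph (Ordinal.omega0 + Ordinal.omega0)).ord) →
    ∃ X : Set Ordinal, X ⊆ Set.Iio (Cardinal.aleph (Ordinal.omega0 + Ordinal.omega0)).ord ∧
      ChangSet X ∧ ∀ s : Finset Ordinal, ↑s ⊆ X → F s ∈ X

/-- The order type of a set of ordinals. -/
def otp (X : Set Ordinal.{0}) : Ordinal.{1} :=
  Ordinal.type (Subrel ((· < ·) : Ordinal → Ordinal → Prop) (· ∈ X))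

/-- `C` is club in `α`. -/
def IsClubIn (C : Set Ordinal) (α : Ordinal) : Prop :=
  C ⊆ Set.Iio α ∧ (∀ β < α, ∃ γ ∈ C, β ≤ γ) ∧
    ∀ β < α, (C ∩ Set.Iio β).Nonempty → sSup (C ∩ Set.Iio β) = β → β ∈ C

/-- `β` is a limit point of `C`. -/
def IsLimitPt (C : Set Ordinal) (β : Ordinal) : Prop :=
  (C ∩ Set.Iio β).Nonempty ∧ sSup (C ∩ Set.Iio β) = β

/-- `C` is a `□_κ`-sequence on `κ⁺ = (succ κ).ord`. -/
def IsSquareSeq (κ : Cardinal.{0}) (C : Ordinal → Set Ordinal) : Prop :=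
  ∀ α < (Order.succ κ).ord, Order.IsSuccLimit α →
    IsClubIn (C α) α ∧ otp (C α) ≤ Ordinal.lift.{1} κ.ord ∧
      ∀ β < α, IsLimitPt (C α) β → C β = C α ∩ Set.Iio β

/-- Jensen's square principle `□_κ`. -/
def Square (κ : Cardinal.{0}) : Prop := ∃ C, IsSquareSeq κ C


/-- The ordinal trace of a set of elements of `H_θ`. -/
def ordsOf {θ : Cardinal.{0}} (S : Set ↥(HSet θ)) : Set Ordinal :=
  {o | ∃ m ∈ S, (m : ZFSet) = ordZF o}

/-- `z` codes the function `g` with domain `μ`. -/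
def codesFn (z : ZFSet) (μ : Ordinal.{0}) (g : Ordinal → Ordinal) : Prop :=
  ∀ w : ZFSet, w ∈ z ↔ ∃ β < μ, w = ZFSet.pair (ordZF β) (ordZF (g β))

/-- `z` codes the indexed family `x` of sets of ordinals, with index set `γ`. -/
def codesFam (z : ZFSet) (γ : Ordinal.{0}) (x : Ordinal → Set Ordinal) : Prop :=
  ∀ w : ZFSet, w ∈ z ↔ ∃ α < γ, ∃ β ∈ x α, w = ZFSet.pair (ordZF α) (ordZF β)

/-- If `X ⊆ ℵ_{ω+ω}` is closed under a uniform family of injections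
`f(α,·) : α ↪ Card(α)` and has the Chang cardinality pattern, then
`otp(X ∩ ℵ_{ω+(n+2)}) = ℵ_{n+2}` for all `n < ω`. -/
theorem stmt1 (f : Ordinal.{0} → Ordinal.{0} → Ordinal.{0})
    (hf_inj : ∀ α < (Cardinal.aleph.{0} (Ordinal.omega0 + Ordinal.omega0)).ord,
      Set.InjOn (f α) (Set.Iio α))
    (hf_lt : ∀ α < (Cardinal.aleph.{0} (Ordinal.omega0 + Ordinal.omega0)).ord,
      ∀ β < α, f α β < α.card.ord)
    (X : Set Ordinal.{0})
    (hXsub : X ⊆ Set.Iio (Cardinal.aleph.{0} (Ordinal.omega0 + Ordinal.omega0)).ord)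
    (hXcl : ∀ α ∈ X, ∀ β ∈ X, f α β ∈ X)
    (hchang : ChangSet X) :
    ∀ n : ℕ, otp (X ∩ Set.Iio (Cardinal.aleph.{0} (Ordinal.omega0 + (n + 2))).ord)
      = Ordinal.lift.{1} (Cardinal.aleph.{0} (n + 2)).ord := by
  intro n
  unfold otp
  have e1 : ((n + 1 : ℕ) : Ordinal) + 1 = (n : Ordinal) + 2 := by
    push_cast; rw [add_assoc, one_add_one_eq_two]
  set κ := (Cardinal.aleph.{0} (Ordinal.omega0 + ((n : Ordinal) + 2))).ord with hκ
  set ν := (Cardinal.aleph.{0} (Ordinal.omega0 + ((n : Ordinal) + 1))).ord with hν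
  set Y := X ∩ Set.Iio κ with hYdef
  set r := Subrel ((· < ·) : Ordinal → Ordinal → Prop) (· ∈ Y) with hr
  have hmkY : Cardinal.mk ↥Y = Cardinal.lift.{1} (Cardinal.aleph.{0} ((n : Ordinal) + 2)) := by
    have := hchang (n + 1); rw [e1] at this; exact this
  have hmkN : Cardinal.mk ↥(X ∩ Set.Iio ν)
      = Cardinal.lift.{1} (Cardinal.aleph.{0} ((n : Ordinal) + 1)) := hchang n
  have hcardle : ∀ α ∈ X, α < κ →
      Cardinal.mk ↥(X ∩ Set.Iio α) ≤ Cardinal.lift.{1} (Cardinal.aleph.{0} ((n : Ordinal) + 1)) := by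
    intro α hαX hακ
    rw [← hmkN]
    have hαbig : α < (Cardinal.aleph.{0} (Ordinal.omega0 + Ordinal.omega0)).ord := hXsub hαX
    have hcard : α.card ≤ Cardinal.aleph.{0} (Ordinal.omega0 + ((n : Ordinal) + 1)) := by
      have h1 : α.card < Cardinal.aleph.{0} (Ordinal.omega0 + ((n : Ordinal) + 2)) :=
        (Cardinal.lt_ord).mp hακ
      have h2 : Ordinal.omega0 + ((n : Ordinal) + 2) =
          Order.succ (Ordinal.omega0 + ((n : Ordinal) + 1)) := by
        rw [← add_one_eq_succ, add_assoc Ordinal.omega0 ((n : Ordinal) + 1) 1,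
          add_assoc (n : Ordinal) 1 1, one_add_one_eq_two]
      rw [h2, Cardinal.aleph_succ, Order.lt_succ_iff] at h1
      exact h1
    refine Cardinal.mk_le_of_injective (f := fun y : ↥(X ∩ Set.Iio α) =>
      (⟨f α y.1, hXcl α hαX y.1 y.2.1, ?_⟩ : ↥(X ∩ Set.Iio ν))) ?_
    · exact lt_of_lt_of_le (hf_lt α hαbig y.1 y.2.2) (Cardinal.ord_le_ord.mpr hcard)
    · intro y1 y2 h
      have := congrArg Subtype.val h
      simp only at this
      exact Subtype.ext (hf_inj α hαbig y1.2.2 y2.2.2 this)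
  apply le_antisymm
  · by_contra h
    push_neg at h
    obtain ⟨a, ha⟩ := Ordinal.typein_surj r h
    have hseg : #{y : ↥Y // r y a} = Cardinal.lift.{1} (Cardinal.aleph.{0} ((n : Ordinal) + 2)) := by
      rw [← card_typein a, ha, ← lift_card, card_ord]
    have hinj : #{y : ↥Y // r y a} ≤ Cardinal.mk ↥(X ∩ Set.Iio (a : Ordinal)) := by
      refine Cardinal.mk_le_of_injective (f := fun y : {y : ↥Y // r y a} =>
        (⟨y.1.1, y.1.2.1, y.2⟩ : ↥(X ∩ Set.Iio (a : Ordinal)))) ?_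
      intro y1 y2 h
      have := congrArg Subtype.val h
      simp only at this
      exact Subtype.ext (Subtype.ext this)
    have hle := hinj.trans (hcardle (a : Ordinal) a.2.1 a.2.2)
    rw [hseg, Cardinal.lift_le] at hle
    have : ((n : Ordinal) + 2) ≤ (n : Ordinal) + 1 := Cardinal.aleph_le_aleph.mp hle
    have h12 : ((n : Ordinal) + 1) < (n : Ordinal) + 2 :=
      (add_lt_add_iff_left (n : Ordinal)).mpr one_lt_two
    exact absurd this (not_le.mpr h12)
  · rw [lift_ord, Cardinal.ord_le, Ordinal.card_type, hmkY]

end Paper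
end
end

section
/- Let ⟨x_α : α < γ⟩ be a family of unbounded subsets of a regular uncountable cardinal λ, pairwise almost disjoint (x_α ∩ x_β bounded in λ for α ≠ β), where γ is an ordinal of cardinality at most λ. Then there exists a sequence ⟨δ_α : α < γ⟩ of ordinals below λ such that the sets x_α \ δ_α, for α < γ, are pairwise disjoint. -/
open Cardinal Ordinal FirstOrder

noncomputable section
namespace Paper

/-- An almost disjoint family of `≤ λ` many unbounded subsets of a regular
uncountable `λ` can be made pairwise disjoint by removing bounded initial segments. -/
theorem stmt3 (lam : Cardinal.{0}) (hreg : lam.IsRegular) (hunc : Cardinal.aleph0 < lam)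
    (γ : Ordinal.{0}) (hγ : γ.card ≤ lam)
    (x : Ordinal → Set Ordinal)
    (hsub : ∀ α < γ, x α ⊆ Set.Iio lam.ord)
    (hunb : ∀ α < γ, ∀ β < lam.ord, ∃ ξ ∈ x α, β < ξ)
    (had : ∀ α < γ, ∀ β < γ, α ≠ β → ∃ δ < lam.ord, x α ∩ x β ⊆ Set.Iio δ) :
    ∃ δ : Ordinal → Ordinal, (∀ α < γ, δ α < lam.ord) ∧
      ∀ α < γ, ∀ β < γ, α ≠ β → Disjoint (x α \ Set.Iio (δ α)) (x β \ Set.Iio (δ β)) := by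
  classical
  have hlampos : (0 : Ordinal) < lam.ord := by
    simpa using Cardinal.ord_lt_ord.2 hreg.pos
  -- bound function
  have hb : ∀ α β : Ordinal, ∃ d, d < lam.ord ∧ (α < γ → β < γ → α ≠ β → x α ∩ x β ⊆ Set.Iio d) := by
    intro α β
    by_cases h : α < γ ∧ β < γ ∧ α ≠ β
    · obtain ⟨d, hd, hsub⟩ := had α h.1 β h.2.1 h.2.2
      exact ⟨d, hd, fun _ _ _ => hsub⟩
    · exact ⟨0, hlampos, fun h1 h2 h3 => absurd ⟨h1, h2, h3⟩ h⟩
  choose b hblt hbspec using hb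
  -- injection e : Iio γ → Iio lam.ord
  have hcard : #γ.ToType ≤ #lam.ord.ToType := by
    rw [mk_toType, mk_toType, Cardinal.card_ord]; exact hγ
  obtain ⟨f⟩ := Cardinal.le_def _ _ |>.mp hcard
  set e : Ordinal → Ordinal := fun α =>
    if h : α < γ then ((ToType.mk (o := lam.ord)).symm (f (ToType.mk (o := γ) ⟨α, h⟩)) : Set.Iio lam.ord).1
    else 0 with he
  have helt : ∀ α < γ, e α < lam.ord := by
    intro α h
    simp only [he, dif_pos h]
    exact ((ToType.mk (o := lam.ord)).symm (f (ToType.mk (o := γ) ⟨α, h⟩))).2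
  have heinj : ∀ α < γ, ∀ β < γ, e α = e β → α = β := by
    intro α hα β hβ h
    simp only [he, dif_pos hα, dif_pos hβ] at h
    have := (ToType.mk (o := lam.ord)).symm.injective (Subtype.ext h)
    have := f.injective this
    have := (ToType.mk (o := γ)).injective this
    exact congrArg Subtype.val this
  -- inverse of e
  set inv : Ordinal → Ordinal := fun ξ =>
    if h : ∃ β, β < γ ∧ e β = ξ then h.choose else 0 with hinv
  have hinv_spec : ∀ β < γ, inv (e β) = β := by
    intro β hβ
    have h : ∃ β', β' < γ ∧ e β' = e β := ⟨β, hβ, rfl⟩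
    simp only [hinv, dif_pos h]
    exact heinj _ h.choose_spec.1 _ hβ h.choose_spec.2
  -- the δ function
  set δ : Ordinal → Ordinal := fun α =>
    ⨆ i : (e α).ToType, b α (inv (((ToType.mk (o := e α)).symm i : Set.Iio (e α)) : Ordinal)) with hδ
  have hδlt : ∀ α < γ, δ α < lam.ord := by
    intro α hα
    apply Ordinal.iSup_lt_ord _ (fun i => hblt _ _)
    rw [mk_toType, hreg.cof_eq, ← Cardinal.lt_ord]
    exact helt α hα
  have key : ∀ α < γ, ∀ β < γ, e β < e α → b α β ≤ δ α := by
    intro α hα β hβ hlt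
    have : b α β = b α (inv (((ToType.mk (o := e α)).symm (ToType.mk (o := e α) ⟨e β, hlt⟩)
        : Set.Iio (e α)) : Ordinal)) := by
      rw [OrderIso.symm_apply_apply]
      simp [hinv_spec β hβ]
    rw [this, hδ]
    exact Ordinal.le_iSup _ _
  refine ⟨δ, hδlt, ?_⟩
  have main : ∀ α < γ, ∀ β < γ, α ≠ β → e β < e α →
      ∀ ξ, ξ ∈ x α \ Set.Iio (δ α) → ξ ∈ x β \ Set.Iio (δ β) → False := by
    intro α hα β hβ hne hlt ξ ⟨hξa, hξa'⟩ ⟨hξb, _⟩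
    have h1 : ξ < b α β := hbspec α β hα hβ hne ⟨hξa, hξb⟩
    have h2 : ξ < δ α := h1.trans_le (key α hα β hβ hlt)
    exact hξa' h2
  intro α hα β hβ hne
  rw [Set.disjoint_left]
  intro ξ h1 h2
  rcases lt_or_gt_of_ne (fun h => hne (heinj α hα β hβ h)) with h | h
  · exact main β hβ α hα hne.symm h ξ h2 h1
  · exact main α hα β hβ hne h ξ h1 h2

end Paper
end
end
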